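/- arXiv:1610.06111 — 2 statements merged into one kernel-verified Lean document; each statement's English description precedes it below -/
import Mathlib

section
/- Let s : B → ℂ be a smooth section that is ∇-holomorphic for the model connection ∇ = d − iπ Σ_α (x_α dy_α − y_α dx_α). If 0 is a regular value of s, then the zero set s⁻¹(0) is a symplectic submanifold of B for ω = Σ_α dx_α ∧ dy_α. -/
open Complex Metric

/-- The model connection 1-form `A = -iπ Σ (x_α dy_α - y_α dx_α)`. -/
noncomputable def modelA (n : ℕ) (z v : Fin n → ℂ) : ℂ :=
  -(Real.pi : ℂ) * Complex.I *
    ((∑ α : Fin n, ((z α).re * (v α).im - (z α).im * (v α).re) : ℝ) : ℂ)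

/-- `s` is `∇`-holomorphic at `z`. -/
def DelBarZeroAt (n : ℕ) (s : (Fin n → ℂ) → ℂ) (z : Fin n → ℂ) : Prop :=
  ∀ v : Fin n → ℂ,
    fderiv ℝ s z (Complex.I • v) + modelA n z (Complex.I • v) * s z
      = Complex.I * (fderiv ℝ s z v + modelA n z v * s z)

/-- The standard symplectic form `ω = Σ dx_α ∧ dy_α` on `ℂⁿ`. -/
def stdOmega (n : ℕ) (u v : Fin n → ℂ) : ℝ :=
  ∑ α : Fin n, ((u α).re * (v α).im - (u α).im * (v α).re)

/-- If `s : B → ℂ` is a smooth `∇`-holomorphic section for the model connection and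
`0` is a regular value of `s`, then the zero set of `s` is a symplectic submanifold
of the ball: at every zero `p` the tangent space `ker ds_p` is nondegenerate for `ω`. -/
theorem model_holomorphic_zero_set_symplectic (n : ℕ) (s : (Fin n → ℂ) → ℂ)
    (hs : ContDiffOn ℝ (⊤ : ℕ∞) s (ball (0 : Fin n → ℂ) 1))
    (hhol : ∀ z ∈ ball (0 : Fin n → ℂ) 1, DelBarZeroAt n s z)
    (hreg : ∀ p ∈ ball (0 : Fin n → ℂ) 1, s p = 0 → fderiv ℝ s p ≠ 0) :
    ∀ p ∈ ball (0 : Fin n → ℂ) 1, s p = 0 →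
      ∀ u : Fin n → ℂ, fderiv ℝ s p u = 0 →
        (∀ v : Fin n → ℂ, fderiv ℝ s p v = 0 → stdOmega n u v = 0) → u = 0 := by
  intro p hp hsp u hu hperp
  have hkerI : fderiv ℝ s p (Complex.I • u) = 0 := by
    have h := hhol p hp u
    rw [hsp] at h
    simp only [mul_zero, add_zero] at h
    rw [h, hu, mul_zero]
  have homg := hperp (Complex.I • u) hkerI
  have hsum : (∑ α : Fin n, ((u α).re ^ 2 + (u α).im ^ 2)) = 0 := by
    rw [← homg]
    unfold stdOmega
    refine Finset.sum_congr rfl fun α _ => ?_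
    simp [Complex.mul_re, Complex.mul_im]
    ring
  funext α
  have hα : (u α).re ^ 2 + (u α).im ^ 2 = 0 := by
    have := Finset.sum_eq_zero_iff_of_nonneg (fun α _ => by positivity) |>.mp hsum α (Finset.mem_univ α)
    exact this
  have h1 : (u α).re = 0 := by nlinarith [sq_nonneg (u α).re, sq_nonneg (u α).im]
  have h2 : (u α).im = 0 := by nlinarith [sq_nonneg (u α).re, sq_nonneg (u α).im]
  exact Complex.ext h1 h2
end

section
/- Symplecticity of zero sets is an open condition: if s_m : B → ℂ converge in C¹ on compacts to σ, where σ is η-transverse to 0 on a compact K ⊂ B and at every zero p of σ the kernel of dσ_p is a symplectic subspace of (ℂⁿ, ω_std) with symplectic nondegeneracy constant at least δ > 0, then for all large m every zero of s_m in K is a regular point of s_m whose kernel ker d(s_m)_p is a symplectic subspace of ℂⁿ. -/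
open Complex Metric Filter Topology

lemma stdOmega_continuous (n : ℕ) :
    Continuous fun q : (Fin n → ℂ) × (Fin n → ℂ) => stdOmega n q.1 q.2 := by
  unfold stdOmega
  fun_prop

lemma stdOmega_smul_left (n : ℕ) (c : ℝ) (u v : Fin n → ℂ) :
    stdOmega n (c • u) v = c * stdOmega n u v := by
  unfold stdOmega
  rw [Finset.mul_sum]
  refine Finset.sum_congr rfl fun α _ => ?_
  simp [Complex.real_smul, Complex.mul_re, Complex.mul_im]
  ring

lemma right_inverse_perturb {E F : Type*} [NormedAddCommGroup E] [NormedSpace ℝ E]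
    [NormedAddCommGroup F] [NormedSpace ℝ F] [CompleteSpace F]
    (T A : E →L[ℝ] F) (R : F →L[ℝ] E)
    (hTR : T.comp R = ContinuousLinearMap.id ℝ F)
    (h : ‖A - T‖ * ‖R‖ ≤ 1 / 2) :
    ∃ R' : F →L[ℝ] E, A.comp R' = ContinuousLinearMap.id ℝ F ∧ ‖R'‖ ≤ 2 * ‖R‖ := by
  have hTRx : ∀ x, T (R x) = x := fun x => by
    simpa using congrArg (fun f => f x) hTR
  set t : F →L[ℝ] F := (T - A).comp R with ht
  have htnorm : ‖t‖ ≤ 1 / 2 := by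
    calc ‖t‖ ≤ ‖T - A‖ * ‖R‖ := ContinuousLinearMap.opNorm_comp_le _ _
    _ = ‖A - T‖ * ‖R‖ := by rw [norm_sub_rev]
    _ ≤ 1 / 2 := h
  have htlt : ‖t‖ < 1 := lt_of_le_of_lt htnorm (by norm_num)
  let w : (F →L[ℝ] F)ˣ := Units.oneSub t htlt
  have hwval : (w : F →L[ℝ] F) = 1 - t := rfl
  have hARw : A.comp R = (w : F →L[ℝ] F) := by
    ext x
    simp [hwval, ht, ContinuousLinearMap.sub_apply, ContinuousLinearMap.comp_apply,
      ContinuousLinearMap.one_def, hTRx x]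
  -- norm bound on w⁻¹
  have hinv_eq : ((w⁻¹ : (F →L[ℝ] F)ˣ) : F →L[ℝ] F)
      = 1 + t * ((w⁻¹ : (F →L[ℝ] F)ˣ) : F →L[ℝ] F) := by
    have h1 : ((w : F →L[ℝ] F)) * ((w⁻¹ : (F →L[ℝ] F)ˣ) : F →L[ℝ] F) = 1 := w.mul_inv
    rw [hwval, sub_mul, one_mul] at h1
    linear_combination (norm := abel) -h1.symm
  have hinvnorm : ‖((w⁻¹ : (F →L[ℝ] F)ˣ) : F →L[ℝ] F)‖ ≤ 2 := by
    set z := ((w⁻¹ : (F →L[ℝ] F)ˣ) : F →L[ℝ] F) with hz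
    have h1 : ‖z‖ ≤ ‖(1 : F →L[ℝ] F)‖ + ‖t‖ * ‖z‖ := by
      calc ‖z‖ = ‖1 + t * z‖ := by rw [← hinv_eq]
      _ ≤ ‖(1 : F →L[ℝ] F)‖ + ‖t * z‖ := norm_add_le _ _
      _ ≤ ‖(1 : F →L[ℝ] F)‖ + ‖t‖ * ‖z‖ := by
          gcongr; exact norm_mul_le _ _
    have h2 : ‖(1 : F →L[ℝ] F)‖ ≤ 1 := by
      rw [ContinuousLinearMap.one_def]; exact ContinuousLinearMap.norm_id_le
    nlinarith [norm_nonneg z, norm_nonneg t]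
  refine ⟨R.comp ((w⁻¹ : (F →L[ℝ] F)ˣ) : F →L[ℝ] F), ?_, ?_⟩
  · ext x
    have h1 := congrArg (fun f : F →L[ℝ] F => f x) w.mul_inv
    simp only [ContinuousLinearMap.mul_apply, ContinuousLinearMap.one_apply] at h1
    have h2 := congrArg (fun f : F →L[ℝ] F => f (((w⁻¹ : (F →L[ℝ] F)ˣ) : F →L[ℝ] F) x)) hARw
    simp only [ContinuousLinearMap.comp_apply] at h2 ⊢
    rw [ContinuousLinearMap.id_apply, h2]
    exact h1
  · calc ‖R.comp ((w⁻¹ : (F →L[ℝ] F)ˣ) : F →L[ℝ] F)‖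
        ≤ ‖R‖ * ‖((w⁻¹ : (F →L[ℝ] F)ˣ) : F →L[ℝ] F)‖ := ContinuousLinearMap.opNorm_comp_le _ _
    _ ≤ ‖R‖ * 2 := by gcongr
    _ = 2 * ‖R‖ := by ring

set_option maxHeartbeats 1000000 in
/-- Symplecticity of zero sets is an open condition: if `s m → σ` in `C¹` on compacts,
`σ` is `η`-transverse to `0` on a compact `K`, and at every zero `p` of `σ` the kernel
of `dσ_p` is symplectic with nondegeneracy constant `≥ δ`, then for all large `m`
every zero of `s m` in `K` is a regular point whose kernel is a symplectic subspace. -/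
theorem symplecticity_open_under_C1_convergence (n : ℕ)
    (s : ℕ → (Fin n → ℂ) → ℂ) (σ : (Fin n → ℂ) → ℂ)
    (hs : ∀ m, ContDiffOn ℝ (⊤ : ℕ∞) (s m) (ball (0 : Fin n → ℂ) 1))
    (hσ : ContDiffOn ℝ (⊤ : ℕ∞) σ (ball (0 : Fin n → ℂ) 1))
    (hC0 : ∀ K : Set (Fin n → ℂ), IsCompact K → K ⊆ ball (0 : Fin n → ℂ) 1 →
      TendstoUniformlyOn (fun m => s m) σ atTop K)
    (hC1 : ∀ K : Set (Fin n → ℂ), IsCompact K → K ⊆ ball (0 : Fin n → ℂ) 1 →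
      TendstoUniformlyOn (fun m z => fderiv ℝ (s m) z) (fun z => fderiv ℝ σ z) atTop K)
    (K : Set (Fin n → ℂ)) (hK : IsCompact K) (hKB : K ⊆ ball (0 : Fin n → ℂ) 1)
    (η : ℝ) (hη : 0 < η)
    (htrans : ∀ z ∈ K, ‖σ z‖ ≤ η →
      η ≤ ‖fderiv ℝ σ z‖ ∧ Function.Surjective (fderiv ℝ σ z))
    (δ : ℝ) (hδ : 0 < δ)
    (hsymp : ∀ p ∈ K, σ p = 0 →
      ∀ u : Fin n → ℂ, fderiv ℝ σ p u = 0 → ‖u‖ = 1 →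
        ∃ v : Fin n → ℂ, fderiv ℝ σ p v = 0 ∧ ‖v‖ = 1 ∧ δ ≤ stdOmega n u v) :
    ∃ M : ℕ, ∀ m ≥ M, ∀ p ∈ K, s m p = 0 →
      Function.Surjective (fderiv ℝ (s m) p) ∧
      (∀ u : Fin n → ℂ, fderiv ℝ (s m) p u = 0 →
        (∀ v : Fin n → ℂ, fderiv ℝ (s m) p v = 0 → stdOmega n u v = 0) → u = 0) := by
  by_contra hcon
  push_neg at hcon
  choose m hm p hpK hz hbad using hcon
  obtain ⟨plim, hplimK, φ, hφmono, hφconv⟩ := hK.tendsto_subseq hpK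
  have hφge : ∀ k, k ≤ m (φ k) := fun k => le_trans hφmono.le_apply (hm (φ k))
  have hballlim : plim ∈ ball (0 : Fin n → ℂ) 1 := hKB hplimK
  set T : (Fin n → ℂ) →L[ℝ] ℂ := fderiv ℝ σ plim with hTdef
  set A : ℕ → ((Fin n → ℂ) →L[ℝ] ℂ) := fun k => fderiv ℝ (s (m (φ k))) (p (φ k)) with hAdef
  -- σ vanishes at the limit point
  have hσ0 : σ plim = 0 := by
    have h1 : Tendsto (fun k => σ (p (φ k))) atTop (𝓝 (σ plim)) :=
      ((hσ.continuousOn.continuousAt (isOpen_ball.mem_nhds hballlim)).tendsto).comp hφconv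
    have h2 : Tendsto (fun k => σ (p (φ k))) atTop (𝓝 0) := by
      rw [NormedAddCommGroup.tendsto_nhds_zero]
      intro ε hε
      have h3 := Metric.tendstoUniformlyOn_iff.mp (hC0 K hK hKB) ε hε
      rw [eventually_atTop] at h3 ⊢
      obtain ⟨M0, hM0⟩ := h3
      refine ⟨M0, fun k hk => ?_⟩
      have h4 := hM0 (m (φ k)) (le_trans hk (hφge k)) (p (φ k)) (hpK (φ k))
      rw [hz (φ k)] at h4
      simpa [dist_eq_norm] using h4
    exact tendsto_nhds_unique h1 h2
  -- convergence of the derivatives at the points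
  have hA : Tendsto A atTop (𝓝 T) := by
    have h1 : Tendsto (fun k => fderiv ℝ σ (p (φ k))) atTop (𝓝 T) :=
      (((hσ.continuousOn_fderiv_of_isOpen isOpen_ball (by simp)).continuousAt
        (isOpen_ball.mem_nhds hballlim)).tendsto).comp hφconv
    have h2 : Tendsto (fun k => A k - fderiv ℝ σ (p (φ k))) atTop (𝓝 0) := by
      rw [NormedAddCommGroup.tendsto_nhds_zero]
      intro ε hε
      have h3 := Metric.tendstoUniformlyOn_iff.mp (hC1 K hK hKB) ε hε
      rw [eventually_atTop] at h3 ⊢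
      obtain ⟨M0, hM0⟩ := h3
      refine ⟨M0, fun k hk => ?_⟩
      have h4 := hM0 (m (φ k)) (le_trans hk (hφge k)) (p (φ k)) (hpK (φ k))
      simpa [hAdef, dist_eq_norm, norm_sub_rev] using h4
    have h5 := h2.add h1
    simpa using h5
  -- T is surjective; get a bounded right inverse
  have hTsurj : Function.Surjective T := (htrans plim hplimK (by simp [hσ0, hη.le])).2
  obtain ⟨Rl, hRl⟩ := LinearMap.exists_rightInverse_of_surjective
      (T : (Fin n → ℂ) →ₗ[ℝ] ℂ) (LinearMap.range_eq_top.mpr hTsurj)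
  set R : ℂ →L[ℝ] (Fin n → ℂ) := LinearMap.toContinuousLinearMap Rl with hRdef
  have hTR : T.comp R = ContinuousLinearMap.id ℝ ℂ := by
    ext x
    have := LinearMap.ext_iff.mp hRl x
    simpa [hRdef] using this
  -- eventually the derivatives are close enough to T
  have hev : ∀ᶠ k in atTop, ‖A k - T‖ * ‖R‖ ≤ 1 / 2 := by
    have h0 : Tendsto (fun k => A k - T) atTop (𝓝 (T - T)) := hA.sub tendsto_const_nhds
    rw [sub_self] at h0
    have h1 : Tendsto (fun k => ‖A k - T‖ * ‖R‖) atTop (𝓝 (‖(0 : (Fin n → ℂ) →L[ℝ] ℂ)‖ * ‖R‖)) :=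
      h0.norm.mul_const ‖R‖
    rw [norm_zero, zero_mul] at h1
    exact h1.eventually_le_const (by norm_num)
  obtain ⟨N, hN⟩ := eventually_atTop.mp hev
  -- for each shifted index, a nonzero degenerate kernel vector exists
  have key : ∀ k : ℕ, ∃ u : Fin n → ℂ,
      A (k + N) u = 0 ∧ (∀ v, A (k + N) v = 0 → stdOmega n u v = 0) ∧ u ≠ 0 := by
    intro k
    have hsurj : Function.Surjective (A (k + N)) := by
      obtain ⟨R', hcomp, -⟩ := right_inverse_perturb T (A (k + N)) R hTR (hN (k + N) (Nat.le_add_left N k))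
      intro y
      refine ⟨R' y, ?_⟩
      have := congrArg (fun f : ℂ →L[ℝ] ℂ => f y) hcomp
      simpa using this
    exact hbad (φ (k + N)) hsurj
  choose u hu hdeg hune using key
  have hunorm : ∀ k, ‖u k‖⁻¹ • u k ∈ sphere (0 : Fin n → ℂ) 1 := by
    intro k
    simp [norm_smul, inv_mul_cancel₀ (norm_ne_zero_iff.mpr (hune k))]
  obtain ⟨ulim, hulimmem, ψ, hψmono, hψconv⟩ :=
    (isCompact_sphere (0 : Fin n → ℂ) 1).tendsto_subseq hunorm
  have hulim1 : ‖ulim‖ = 1 := mem_sphere_zero_iff_norm.mp hulimmem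
  -- operators along the sub-subsequence converge to T
  have hgt : Tendsto (fun j => ψ j + N) atTop atTop :=
    tendsto_atTop_mono (fun j => le_trans hψmono.le_apply (Nat.le_add_right _ _)) tendsto_id
  have hAψ : Tendsto (fun j => A (ψ j + N)) atTop (𝓝 T) := hA.comp hgt
  have hc : Continuous fun q : (((Fin n → ℂ) →L[ℝ] ℂ) × (Fin n → ℂ)) => q.1 q.2 :=
    isBoundedBilinearMap_apply.continuous
  -- T ulim = 0
  have hTulim : T ulim = 0 := by
    have happly : Tendsto (fun j => A (ψ j + N) (‖u (ψ j)‖⁻¹ • u (ψ j))) atTop (𝓝 (T ulim)) :=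
      (hc.tendsto (T, ulim)).comp (hAψ.prodMk_nhds hψconv)
    have h0 : (fun j => A (ψ j + N) (‖u (ψ j)‖⁻¹ • u (ψ j))) = fun _ => (0 : ℂ) := by
      funext j
      rw [map_smul, hu (ψ j), smul_zero]
    rw [h0] at happly
    exact tendsto_nhds_unique happly tendsto_const_nhds
  obtain ⟨v, hTv, hv1, hδv⟩ := hsymp plim hplimK hσ0 ulim hTulim hulim1
  -- right inverses along the sub-subsequence
  have hRinv : ∀ j, ∃ R' : ℂ →L[ℝ] (Fin n → ℂ),
      (A (ψ j + N)).comp R' = ContinuousLinearMap.id ℝ ℂ ∧ ‖R'‖ ≤ 2 * ‖R‖ :=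
    fun j => right_inverse_perturb T _ R hTR (hN (ψ j + N) (Nat.le_add_left N (ψ j)))
  choose R' hR'c hR'n using hRinv
  set w : ℕ → (Fin n → ℂ) := fun j => v - R' j (A (ψ j + N) v) with hwdef
  have hwker : ∀ j, A (ψ j + N) (w j) = 0 := by
    intro j
    have happ : ∀ y : ℂ, A (ψ j + N) (R' j y) = y := fun y => by
      simpa using congrArg (fun f : ℂ →L[ℝ] ℂ => f y) (hR'c j)
    rw [hwdef]
    simp only [map_sub, happ, sub_self]
  have hAv : Tendsto (fun j => A (ψ j + N) v) atTop (𝓝 0) := by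
    have h1 : Tendsto (fun j => A (ψ j + N) v) atTop (𝓝 (T v)) :=
      (hc.tendsto (T, v)).comp (hAψ.prodMk_nhds tendsto_const_nhds)
    rwa [hTv] at h1
  have hw : Tendsto w atTop (𝓝 v) := by
    have h2 : Tendsto (fun j => R' j (A (ψ j + N) v)) atTop (𝓝 0) := by
      refine squeeze_zero_norm (a := fun j => 2 * ‖R‖ * ‖A (ψ j + N) v‖) (fun j => ?_) ?_
      · exact ((R' j).le_opNorm _).trans
          (mul_le_mul_of_nonneg_right (hR'n j) (norm_nonneg _))
      · have h3 : Tendsto (fun j => 2 * ‖R‖ * ‖A (ψ j + N) v‖) atTop (𝓝 (2 * ‖R‖ * ‖(0 : ℂ)‖)) :=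
          hAv.norm.const_mul _
        simpa using h3
    have h4 : Tendsto (fun j => v - R' j (A (ψ j + N) v)) atTop (𝓝 (v - 0)) :=
      tendsto_const_nhds.sub h2
    rw [sub_zero] at h4
    exact h4
  -- the symplectic pairing vanishes along the sequence but is ≥ δ in the limit
  have hω0 : ∀ j, stdOmega n (‖u (ψ j)‖⁻¹ • u (ψ j)) (w j) = 0 := by
    intro j
    rw [stdOmega_smul_left, hdeg (ψ j) (w j) (hwker j), mul_zero]
  have hpair : Tendsto (fun j => (‖u (ψ j)‖⁻¹ • u (ψ j), w j)) atTop (𝓝 (ulim, v)) :=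
    hψconv.prodMk_nhds hw
  have hωlim := ((stdOmega_continuous n).tendsto (ulim, v)).comp hpair
  have hfinal : stdOmega n ulim v = 0 := by
    have h0 : ((fun q : (Fin n → ℂ) × (Fin n → ℂ) => stdOmega n q.1 q.2) ∘
        (fun j => (‖u (ψ j)‖⁻¹ • u (ψ j), w j))) = fun _ => (0 : ℝ) := by
      funext j
      exact hω0 j
    rw [h0] at hωlim
    exact tendsto_nhds_unique hωlim tendsto_const_nhds
  linarith
end
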